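/- arXiv:1810.04620 — 10 statements merged into one kernel-verified Lean document; each statement's English description precedes it below -/
import Mathlib

section
/- For every r ≥ 2, every graph G that is (K_{r-1} plus an isolated vertex)-free and has a vertex whose non-neighborhood has size at least n^((r-2)/(r-1)) contains an independent set of size at least n^(1/(r-1)), where n = |V(G)|. -/
def IsIndep {V : Type} (G : SimpleGraph V) (s : Set V) : Prop :=
  s.Pairwise fun u v => ¬ G.Adj u v

/-!
Let `S` be the non-neighbourhood of a vertex `v` with `|S| ≥ n^((r-2)/(r-1))`. A `(r-1)`-clique
inside `S` together with `v` would be a forbidden `K_{r-1} ⊎ K_1`, so `S` is `K_{r-1}`-free, and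
the Ramsey bound yields an independent set of size `|S|^(1/(r-2)) ≥ n^(1/(r-1))`. When `r ≤ 2`,
the nonempty set `S` already contains an `(r-1)`-clique, as every set of at most one vertex does.
-/

open Finset

lemma SimpleGraph.exists_isNClique_subset_of_le_one {V : Type} (G : SimpleGraph V) {k : ℕ}
    (hk : k ≤ 1) {S : Finset V} (hS : S.Nonempty) : ∃ t ⊆ S, G.IsNClique k t := by
  obtain ⟨t, htS, htk⟩ := exists_subset_card_eq (hk.trans (one_le_card.2 hS))
  have hsub : (t : Set V).Subsingleton := fun a ha b hb =>
    card_le_one.1 (htk ▸ hk) a ha b hb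
  exact ⟨t, htS, (G.isNClique_iff).2 ⟨hsub.pairwise _, htk⟩⟩

lemma Real.rpow_div_sub_one_le_rpow_of_rpow_le {n m r : ℝ} (hn : 0 ≤ n) (hm : 0 ≤ m)
    (hr : 2 < r) (h : n ^ ((r - 2) / (r - 1)) ≤ m) :
    n ^ (1 / (r - 1)) ≤ m ^ (1 / (r - 2)) := by
  rw [one_div (r - 2), Real.le_rpow_inv_iff_of_pos (Real.rpow_nonneg hn _) hm (by linarith),
    ← Real.rpow_mul hn, one_div_mul_eq_div]
  exact h

theorem stmt1_general {V : Type} [Fintype V] [DecidableEq V] (r : ℕ)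
    (G : SimpleGraph V) [DecidableRel G.Adj]
    (hfree : ¬ ∃ (s : Finset V) (v : V), G.IsNClique (r - 1) s ∧ v ∉ s ∧
      ∀ u ∈ s, ¬ G.Adj v u)
    (hRam : ∀ S : Finset V, (∀ t ⊆ S, ¬ G.IsNClique (r - 1) t) →
      ∃ t ⊆ S, IsIndep G ↑t ∧ (S.card : ℝ) ^ ((1 : ℝ) / ((r : ℝ) - 2)) ≤ (t.card : ℝ))
    (hvertex : ∃ v : V,
      (Fintype.card V : ℝ) ^ (((r : ℝ) - 2) / ((r : ℝ) - 1)) ≤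
        ((Finset.univ.filter fun u => u ≠ v ∧ ¬ G.Adj v u).card : ℝ)) :
    ∃ s : Finset V, IsIndep G ↑s ∧
      (Fintype.card V : ℝ) ^ ((1 : ℝ) / ((r : ℝ) - 1)) ≤ (s.card : ℝ) := by
  obtain ⟨v, hv⟩ := hvertex
  set S := univ.filter fun u => u ≠ v ∧ ¬ G.Adj v u
  have hS_free : ∀ t ⊆ S, ¬ G.IsNClique (r - 1) t := fun t htS ht =>
    hfree ⟨t, v, ht, fun hvt => (mem_filter.1 (htS hvt)).2.1 rfl,
      fun u hu => (mem_filter.1 (htS hu)).2.2⟩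
  have hn : (0 : ℝ) < Fintype.card V := by exact_mod_cast Fintype.card_pos_iff.2 ⟨v⟩
  have hS_ne : S.Nonempty :=
    card_pos.1 (by exact_mod_cast (Real.rpow_pos_of_pos hn _).trans_le hv)
  rcases le_or_gt r 2 with hr | hr
  · obtain ⟨t, htS, ht⟩ := G.exists_isNClique_subset_of_le_one (k := r - 1) (by omega) hS_ne
    exact absurd ht (hS_free t htS)
  · obtain ⟨t, -, ht_indep, ht_card⟩ := hRam S hS_free
    refine ⟨t, ht_indep, le_trans ?_ ht_card⟩
    exact Real.rpow_div_sub_one_le_rpow_of_rpow_le hn.le (Nat.cast_nonneg _)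
      (by exact_mod_cast hr) hv

/-- For every `r ≥ 2`, every graph `G` that is `(K_{r-1} ⊎ K_1)`-free (no clique of size `r-1`
together with a vertex non-adjacent to all of it) and has a vertex whose non-neighborhood has
size at least `n^((r-2)/(r-1))` contains an independent set of size at least `n^(1/(r-1))`.
We assume the Ramsey fact that every `K_{r-1}`-free induced subgraph on `m` vertices has an
independent set of size `m^(1/(r-2))`. -/
theorem stmt1 {V : Type} [Fintype V] [DecidableEq V] (r : ℕ) (hr : 2 ≤ r)
    (G : SimpleGraph V) [DecidableRel G.Adj]
    (hfree : ¬ ∃ (s : Finset V) (v : V), G.IsNClique (r - 1) s ∧ v ∉ s ∧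
      ∀ u ∈ s, ¬ G.Adj v u)
    (hRam : ∀ S : Finset V, (∀ t ⊆ S, ¬ G.IsNClique (r - 1) t) →
      ∃ t ⊆ S, IsIndep G ↑t ∧ (S.card : ℝ) ^ ((1 : ℝ) / ((r : ℝ) - 2)) ≤ (t.card : ℝ))
    (hvertex : ∃ v : V,
      (Fintype.card V : ℝ) ^ (((r : ℝ) - 2) / ((r : ℝ) - 1)) ≤
        ((Finset.univ.filter fun u => u ≠ v ∧ ¬ G.Adj v u).card : ℝ)) :
    ∃ s : Finset V, IsIndep G ↑s ∧
      (Fintype.card V : ℝ) ^ ((1 : ℝ) / ((r : ℝ) - 1)) ≤ (s.card : ℝ) :=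
  stmt1_general r G hfree hRam hvertex
end

section
/- Let G be a graph in which every vertex has non-degree (number of non-neighbors) at most n^((r-2)/(r-1)) - 1, where n = |V(G)| and r ≥ 2. Then G contains a clique of size at least n^(1/(r-1)). -/
/-!
Greedy argument: pick a vertex, keep only its neighbours and repeat. Each step adds one vertex
to the clique and discards at most `D = n^((r-2)/(r-1))` vertices (the chosen vertex and its
non-neighbours), so the clique obtained has at least `n / D = n^(1/(r-1))` vertices.
-/

open Finset

namespace SimpleGraph

variable {V : Type*} [Fintype V] [DecidableEq V] (G : SimpleGraph V) [DecidableRel G.Adj]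

theorem card_filter_ne_not_adj (v : V) :
    #{u | u ≠ v ∧ ¬ G.Adj v u} = Gᶜ.degree v := by
  rw [← card_neighborFinset_eq_degree]
  congr 1
  ext u
  simp [eq_comm]

theorem card_sdiff_neighborFinset_le (A : Finset V) (v : V) :
    #(A \ G.neighborFinset v) ≤ Gᶜ.degree v + 1 := by
  have hsub : A \ G.neighborFinset v ⊆ insert v (Gᶜ.neighborFinset v) := by
    intro u hu
    rw [mem_sdiff, mem_neighborFinset] at hu
    rw [mem_insert, mem_neighborFinset, compl_adj]
    by_cases h : v = u
    · exact .inl h.symm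
    · exact .inr ⟨h, hu.2⟩
  calc #(A \ G.neighborFinset v) ≤ #(insert v (Gᶜ.neighborFinset v)) := card_le_card hsub
    _ ≤ #(Gᶜ.neighborFinset v) + 1 := card_insert_le _ _
    _ = Gᶜ.degree v + 1 := by rw [card_neighborFinset_eq_degree]

theorem exists_isClique_subset_card_le_mul {D : ℝ} (hD : ∀ v, (Gᶜ.degree v : ℝ) + 1 ≤ D)
    (A : Finset V) : ∃ s ⊆ A, G.IsClique (s : Set V) ∧ (#A : ℝ) ≤ #s * D := by
  induction A using Finset.strongInduction with
  | _ A ih =>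
  obtain rfl | ⟨v, hv⟩ := A.eq_empty_or_nonempty
  · exact ⟨∅, empty_subset _, by simp, by simp⟩
  set A' := A ∩ G.neighborFinset v
  have hvA' : v ∉ A' := by simp [A']
  have hA' : A' ⊂ A := ⟨inter_subset_left, fun h => hvA' (h hv)⟩
  obtain ⟨s, hsA', hs, hcard⟩ := ih A' hA'
  have hvs : v ∉ s := fun h => hvA' (hsA' h)
  refine ⟨insert v s, insert_subset hv (hsA'.trans hA'.subset), ?_, ?_⟩
  · rw [coe_insert]
    exact hs.insert fun u hu _ => (G.mem_neighborFinset v u).1 (mem_inter.1 (hsA' hu)).2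
  · have hsplit : #A = #(A \ G.neighborFinset v) + #A' := by
      rw [card_sdiff_add_card_inter]
    have hrest : (#(A \ G.neighborFinset v) : ℝ) ≤ D :=
      le_trans (by exact_mod_cast G.card_sdiff_neighborFinset_le A v) (hD v)
    rw [card_insert_of_notMem hvs, hsplit]
    push_cast
    linarith

end SimpleGraph

theorem Real.rpow_le_of_le_mul_rpow {x k p q : ℝ} (hx : 0 ≤ x) (hk : 0 ≤ k) (hp : p ≠ 0)
    (hpq : p + q = 1) (h : x ≤ k * x ^ q) : x ^ p ≤ k := by
  obtain rfl | hx := hx.eq_or_lt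
  · rwa [Real.zero_rpow hp]
  have hxq : 0 < x ^ q := Real.rpow_pos_of_pos hx q
  refine le_of_mul_le_mul_right ?_ hxq
  rwa [← Real.rpow_add hx, hpq, Real.rpow_one]

/-- If every vertex of `G` has non-degree at most `n^((r-2)/(r-1)) - 1`, then `G` contains a
clique of size at least `n^(1/(r-1))`. -/
theorem stmt2 {V : Type} [Fintype V] [DecidableEq V] (r : ℕ) (hr : 2 ≤ r)
    (G : SimpleGraph V) [DecidableRel G.Adj]
    (hnondeg : ∀ v : V,
      ((Finset.univ.filter fun u => u ≠ v ∧ ¬ G.Adj v u).card : ℝ) ≤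
        (Fintype.card V : ℝ) ^ (((r : ℝ) - 2) / ((r : ℝ) - 1)) - 1) :
    ∃ s : Finset V, G.IsClique ↑s ∧
      (Fintype.card V : ℝ) ^ ((1 : ℝ) / ((r : ℝ) - 1)) ≤ (s.card : ℝ) := by
  have hD : ∀ v, (Gᶜ.degree v : ℝ) + 1 ≤ (Fintype.card V : ℝ) ^ (((r : ℝ) - 2) / ((r : ℝ) - 1)) :=
    fun v => by linarith [G.card_filter_ne_not_adj v ▸ hnondeg v]
  obtain ⟨s, -, hs, hcard⟩ := G.exists_isClique_subset_card_le_mul hD univ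
  have hr1 : (r : ℝ) - 1 ≠ 0 := by
    have : (2 : ℝ) ≤ r := by exact_mod_cast hr
    linarith
  refine ⟨s, hs, Real.rpow_le_of_le_mul_rpow (by positivity) (by positivity)
    (one_div_ne_zero hr1) ?_ (by simpa using hcard)⟩
  field_simp
  ring
end

section
/- Let G be a graph in which every vertex has degree at most n^((r-2)/(r-1)) - 1, where n = |V(G)| and r ≥ 2. Then G contains an independent set of size at least n^(1/(r-1)). -/
/-!
Greedily pick a vertex and discard it together with its neighbours: each chosen vertex costs at
most `Δ + 1` vertices, so every graph on `n` vertices with maximum degree `Δ` has an independent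
set of size at least `n / (Δ + 1)`. Here `Δ + 1 ≤ n^((r-2)/(r-1))`, and
`n / n^((r-2)/(r-1)) = n^(1/(r-1))`.
-/

open Finset

namespace SimpleGraph

variable {V : Type*} [Fintype V] [DecidableEq V] (G : SimpleGraph V) [DecidableRel G.Adj]

theorem exists_isIndepSet_subset_card_le_mul (s : Finset V) :
    ∃ t ⊆ s, G.IsIndepSet (t : Set V) ∧ #s ≤ #t * (G.maxDegree + 1) := by
  induction s using Finset.strongInduction with
  | H s ih =>
    rcases s.eq_empty_or_nonempty with rfl | ⟨v, hv⟩
    · exact ⟨∅, subset_refl _, by simp, by simp⟩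
    set s' := s \ insert v (G.neighborFinset v)
    have hvs' : v ∉ s' := by simp [s']
    obtain ⟨t, hts', ht, hcard⟩ := ih s' (ssubset_of_subset_of_ne sdiff_subset
      (fun h => hvs' (h ▸ hv)))
    refine ⟨insert v t, insert_subset hv (hts'.trans sdiff_subset), ?_, ?_⟩
    · rw [coe_insert, IsIndepSet, Set.pairwise_insert]
      refine ⟨ht, fun u hu _ => ?_⟩
      have hu' : u ∉ G.neighborFinset v :=
        fun h => (mem_sdiff.1 (hts' hu)).2 (mem_insert_of_mem h)
      rw [mem_neighborFinset] at hu'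
      exact ⟨hu', fun h => hu' h.symm⟩
    · have hvt : v ∉ t := fun h => hvs' (hts' h)
      calc #s ≤ #s' + #(insert v (G.neighborFinset v)) := card_le_card_sdiff_add_card
        _ ≤ #t * (G.maxDegree + 1) + (G.maxDegree + 1) := by
          gcongr
          exact (card_insert_le _ _).trans (by simpa using G.degree_le_maxDegree v)
        _ = #(insert v t) * (G.maxDegree + 1) := by rw [card_insert_of_notMem hvt]; ring

theorem exists_isIndepSet_card_le_mul :
    ∃ t : Finset V, G.IsIndepSet (t : Set V) ∧ Fintype.card V ≤ #t * (G.maxDegree + 1) := by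
  obtain ⟨t, -, ht, hcard⟩ := G.exists_isIndepSet_subset_card_le_mul univ
  exact ⟨t, ht, hcard⟩

end SimpleGraph

/-- If every vertex of `G` has degree at most `n^((r-2)/(r-1)) - 1`, then `G` contains an
independent set of size at least `n^(1/(r-1))`. -/
theorem stmt3 {V : Type} [Fintype V] (r : ℕ) (hr : 2 ≤ r)
    (G : SimpleGraph V) [DecidableRel G.Adj]
    (hdeg : ∀ v : V,
      ((G.degree v : ℝ)) ≤ (Fintype.card V : ℝ) ^ (((r : ℝ) - 2) / ((r : ℝ) - 1)) - 1) :
    ∃ s : Finset V, IsIndep G ↑s ∧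
      (Fintype.card V : ℝ) ^ ((1 : ℝ) / ((r : ℝ) - 1)) ≤ (s.card : ℝ) := by
  classical
  have hr1 : 0 < (r : ℝ) - 1 := by
    have : (2 : ℝ) ≤ r := by exact_mod_cast hr
    linarith
  rcases isEmpty_or_nonempty V with hV | hV
  · refine ⟨∅, by simp [IsIndep], ?_⟩
    rw [Fintype.card_eq_zero, Nat.cast_zero, Real.zero_rpow (one_div_pos.2 hr1).ne']
    simp
  set n : ℝ := (Fintype.card V : ℝ)
  set D : ℝ := n ^ (((r : ℝ) - 2) / ((r : ℝ) - 1))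
  have hn : 0 < n := by simp [n, Fintype.card_pos]
  have hsplit : n ^ ((1 : ℝ) / ((r : ℝ) - 1)) * D = n := by
    rw [← Real.rpow_add hn, ← add_div, show 1 + ((r : ℝ) - 2) = (r : ℝ) - 1 by ring,
      div_self hr1.ne', Real.rpow_one]
  have hΔ : (G.maxDegree : ℝ) + 1 ≤ D := by
    obtain ⟨v, hv⟩ := G.exists_maximal_degree_vertex
    linarith [hv ▸ hdeg v]
  obtain ⟨t, ht, hcard⟩ := G.exists_isIndepSet_card_le_mul
  refine ⟨t, ht, le_of_mul_le_mul_right ?_ (Real.rpow_pos_of_pos hn _ : 0 < D)⟩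
  calc n ^ ((1 : ℝ) / ((r : ℝ) - 1)) * D = n := hsplit
    _ ≤ #t * ((G.maxDegree : ℝ) + 1) := by simp only [n]; exact_mod_cast hcard
    _ ≤ #t * D := by gcongr
end

section
/- Let G be a graph whose vertex set is partitioned into an independent set {x_1,...,x_k} and k-1 pairwise vertex-disjoint nonempty sets C_1,...,C_{k-1}, each inducing a clique, such that G contains no independent set of size k intersecting the union of the C_p's. Then the bipartite 'adjacency pattern' graph B — with parts {x_1,...,x_k} and {C_1,...,C_{k-1}}, and an edge between x_i and C_p whenever x_i has a neighbor in C_p — is connected. -/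
/-!
Let `Q` be a union of components of `B`, with `I` its `x`-vertices and `P` its clique vertices.
Since no edge of `G` joins `x i` (`i ∈ I`) to a clique outside `P`, the `x i` with `i ∈ I` together
with the representatives `c p` with `p ∉ P` form an independent set of size `|I| + (k - 1 - |P|)`.
If `|I| > |P|` and `Q` is proper, some clique lies outside `P`, so this set meets the cliques and
has at least `k` elements, which is excluded. Hence `|I| ≤ |P|`. Applying this to a component and to its complement gives `k ≤ k - 1`.
-/

open Finset

section AdjPattern

variable {V : Type} {ι κ : Type*} (G : SimpleGraph V) (x : ι → V) (C : κ → Finset V)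

def adjPattern : SimpleGraph (ι ⊕ κ) :=
  SimpleGraph.fromRel fun a b => ∃ i p, a = Sum.inl i ∧ b = Sum.inr p ∧ ∃ w ∈ C p, G.Adj (x i) w

variable {G x C}

theorem adjPattern_adj_of_adj {i : ι} {p : κ} {w : V} (hw : w ∈ C p) (h : G.Adj (x i) w) :
    (adjPattern G x C).Adj (.inl i) (.inr p) :=
  (SimpleGraph.fromRel_adj _ _ _).2 ⟨Sum.inl_ne_inr, .inl ⟨i, p, rfl, rfl, w, hw, h⟩⟩

theorem IsIndep.card_lt_of_mem {P : V → Prop} {k : ℕ} (hk : 1 ≤ k)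
    (hno : ¬ ∃ s : Finset V, IsIndep G ↑s ∧ #s = k ∧ ∃ v ∈ s, P v)
    {s : Finset V} (hs : IsIndep G ↑s) {v : V} (hv : v ∈ s) (hPv : P v) : #s < k := by
  by_contra! hks
  obtain ⟨t, hvt, hts, htk⟩ :=
    exists_subsuperset_card_eq (singleton_subset_iff.2 hv) (by simpa using hk) hks
  exact hno ⟨t, Set.Pairwise.mono (coe_subset.2 hts) hs, htk, v, singleton_subset_iff.1 hvt, hPv⟩

theorem isIndep_image_union [DecidableEq V] {c : κ → V} (hxind : IsIndep G (Set.range x))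
    (hcind : IsIndep G (Set.range c)) {I : Finset ι} {P : Finset κ}
    (hcross : ∀ i ∈ I, ∀ p ∈ P, ¬ G.Adj (x i) (c p)) :
    IsIndep G ↑(I.image x ∪ P.image c) := by
  intro u hu v hv huv
  simp only [coe_union, coe_image, Set.mem_union, Set.mem_image, mem_coe] at hu hv
  rcases hu with ⟨i, hi, rfl⟩ | ⟨p, hp, rfl⟩ <;> rcases hv with ⟨j, hj, rfl⟩ | ⟨q, hq, rfl⟩
  · exact hxind (Set.mem_range_self i) (Set.mem_range_self j) huv
  · exact hcross i hi q hq
  · exact fun hadj => hcross j hj p hp hadj.symm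
  · exact hcind (Set.mem_range_self p) (Set.mem_range_self q) huv

variable [Fintype ι] [Fintype κ] {c : κ → V}

theorem card_filter_inl_le_card_filter_inr (hxinj : Function.Injective x)
    (hxind : IsIndep G (Set.range x)) (hcinj : Function.Injective c)
    (hcind : IsIndep G (Set.range c)) (hxc : ∀ i p, x i ≠ c p) (hc : ∀ p, c p ∈ C p)
    (hcard : Fintype.card ι = Fintype.card κ + 1)
    (hsmall : ∀ s : Finset V, IsIndep G ↑s → ∀ p, c p ∈ s → #s < Fintype.card ι)
    (Q : ι ⊕ κ → Prop) [DecidablePred Q]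
    (hQ : ∀ a b, (adjPattern G x C).Adj a b → Q a → Q b) (hQne : ∃ a, ¬ Q a) :
    #{i | Q (.inl i)} ≤ #{p | Q (.inr p)} := by
  classical
  set I : Finset ι := {i | Q (.inl i)}
  set P : Finset κ := {p | ¬ Q (.inr p)}
  by_contra! hlt
  have hP : #{p | Q (.inr p)} + #P = Fintype.card κ := card_filter_add_card_filter_not _
  obtain ⟨p₀, hp₀⟩ : P.Nonempty := by
    rw [nonempty_iff_ne_empty]
    intro hPe
    have hI : I = univ := eq_univ_of_card I (le_antisymm (card_le_univ I) (by rw [hPe, card_empty] at hP; omega))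
    obtain ⟨a | a, ha⟩ := hQne
    · exact ha (mem_filter.1 (hI ▸ mem_univ a : a ∈ I)).2
    · exact ha (of_not_not (filter_eq_empty_iff.1 hPe (mem_univ a)))
  have hcross : ∀ i ∈ I, ∀ p ∈ P, ¬ G.Adj (x i) (c p) := fun i hi p hp hadj =>
    (mem_filter.1 hp).2 (hQ _ _ (adjPattern_adj_of_adj (hc p) hadj) (mem_filter.1 hi).2)
  have hdisj : Disjoint (I.image x) (P.image c) := by
    simp only [disjoint_left, mem_image]
    rintro _ ⟨i, -, rfl⟩ ⟨p, -, hp⟩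
    exact hxc i p hp.symm
  have hT := hsmall _ (isIndep_image_union hxind hcind hcross) p₀
    (mem_union_right _ (mem_image_of_mem c hp₀))
  rw [card_union_of_disjoint hdisj, card_image_of_injective _ hxinj,
    card_image_of_injective _ hcinj] at hT
  omega

theorem adjPattern_connected (hxinj : Function.Injective x) (hxind : IsIndep G (Set.range x))
    (hcinj : Function.Injective c) (hcind : IsIndep G (Set.range c)) (hxc : ∀ i p, x i ≠ c p)
    (hc : ∀ p, c p ∈ C p) (hcard : Fintype.card ι = Fintype.card κ + 1)
    (hsmall : ∀ s : Finset V, IsIndep G ↑s → ∀ p, c p ∈ s → #s < Fintype.card ι) :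
    (adjPattern G x C).Connected := by
  classical
  set B := adjPattern G x C
  have key := card_filter_inl_le_card_filter_inr hxinj hxind hcinj hcind hxc hc hcard hsmall
  refine (SimpleGraph.connected_iff B).2 ⟨fun u v => ?_, ?_⟩
  · by_contra huv
    have h₁ := key (B.Reachable u) (fun a b hab h => h.trans hab.reachable) ⟨v, huv⟩
    have h₂ := key (¬ B.Reachable u ·) (fun a b hab h h' => h (h'.trans hab.symm.reachable))
      ⟨u, not_not.2 .rfl⟩
    have hι := card_filter_add_card_filter_not (s := univ) fun i : ι => B.Reachable u (.inl i)
    have hκ := card_filter_add_card_filter_not (s := univ) fun p : κ => B.Reachable u (.inr p)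
    simp only [card_univ] at hι hκ
    omega
  · have : Nonempty ι := Fintype.card_pos_iff.1 (by omega)
    infer_instance

end AdjPattern

theorem stmt4_general {V : Type} (G : SimpleGraph V) (k : ℕ) (hk : 1 ≤ k)
    (x : Fin k → V) (hxinj : Function.Injective x)
    (hxind : IsIndep G (Set.range x))
    (C : Fin (k - 1) → Finset V)
    (hCdisj : ∀ p q, p ≠ q → Disjoint (C p) (C q))
    (hxC : ∀ i p, x i ∉ C p)
    (hno : ¬ ∃ s : Finset V, IsIndep G ↑s ∧ s.card = k ∧ ∃ v ∈ s, ∃ p, v ∈ C p)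
    (c : Fin (k - 1) → V) (hc : ∀ p, c p ∈ C p)
    (hcind : IsIndep G (Set.range c)) :
    (SimpleGraph.fromRel (fun a b : Fin k ⊕ Fin (k - 1) =>
      ∃ i p, a = Sum.inl i ∧ b = Sum.inr p ∧ ∃ w ∈ C p, G.Adj (x i) w)).Connected := by
  have hcinj : Function.Injective c := fun p q hpq => by
    by_contra hne
    exact disjoint_left.1 (hCdisj p q hne) (hc p) (hpq ▸ hc q)
  refine adjPattern_connected hxinj hxind hcinj hcind (fun i p h => hxC i p (h ▸ hc p)) hc
    (by simp only [Fintype.card_fin]; omega) fun s hs p hp => ?_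
  simpa using hs.card_lt_of_mem hk hno hp ⟨p, hc p⟩

/-- Vertices partitioned into an independent set `{x_1,...,x_k}` and pairwise disjoint nonempty
cliques `C_1,...,C_{k-1}` admitting an independent system of representatives, with no independent
set of size `k` meeting the cliques: then the bipartite adjacency-pattern graph is connected. -/
theorem stmt4 {V : Type} [Fintype V] (G : SimpleGraph V) (k : ℕ) (hk : 1 ≤ k)
    (x : Fin k → V) (hxinj : Function.Injective x)
    (hxind : IsIndep G (Set.range x))
    (C : Fin (k - 1) → Finset V)
    (hCne : ∀ p, (C p).Nonempty)
    (hCcl : ∀ p, G.IsClique ↑(C p))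
    (hCdisj : ∀ p q, p ≠ q → Disjoint (C p) (C q))
    (hxC : ∀ i p, x i ∉ C p)
    (hpart : ∀ v : V, (∃ i, v = x i) ∨ ∃ p, v ∈ C p)
    (hno : ¬ ∃ s : Finset V, IsIndep G ↑s ∧ s.card = k ∧ ∃ v ∈ s, ∃ p, v ∈ C p)
    (c : Fin (k - 1) → V) (hc : ∀ p, c p ∈ C p)
    (hcind : IsIndep G (Set.range c)) :
    (SimpleGraph.fromRel (fun a b : Fin k ⊕ Fin (k - 1) =>
      ∃ i p, a = Sum.inl i ∧ b = Sum.inr p ∧ ∃ w ∈ C p, G.Adj (x i) w)).Connected :=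
  stmt4_general G k hk x hxinj hxind C hCdisj hxC hno c hc hcind
end

section
/- Let G be a graph, r ≥ 2, and suppose C ⊆ V(G) induces a clique with |C| > r². If G is H-free, where H = K_r minus a star K_{1,r-2} (i.e., K_r with the edges from one vertex to r-2 others removed), then every vertex u ∈ N(C) \ C has at least |C| - (r-3) neighbors in C. -/
open Finset

namespace SimpleGraph

variable {V : Type*} {G : SimpleGraph V} [DecidableRel G.Adj]

/-- Together with `u`, the clique `s` induces a copy of `K_{k+2} \ K_{1,k}`. -/
theorem exists_isNClique_adj_unique_of_le_card_filter_not_adj {C : Finset V} {u w : V} {k : ℕ}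
    (hC : G.IsClique (C : Set V)) (hu : u ∉ C) (hw : w ∈ C) (huw : G.Adj u w)
    (hk : k ≤ #(C.filter fun z => ¬ G.Adj u z)) :
    ∃ s : Finset V, G.IsNClique (k + 1) s ∧ u ∉ s ∧ w ∈ s ∧
      ∀ z ∈ s, z ≠ w → ¬ G.Adj u z := by
  obtain ⟨T, hTnon, hTcard⟩ := exists_subset_card_eq hk
  have hTC : T ⊆ C := hTnon.trans (filter_subset _ _)
  have hwT : w ∉ T := fun hwT => (mem_filter.mp (hTnon hwT)).2 huw
  refine ⟨cons w T hwT, ⟨hC.subset ?_, by rw [card_cons, hTcard]⟩, ?_, mem_cons_self _ _, ?_⟩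
  · simpa [Set.insert_subset_iff] using ⟨hw, hTC⟩
  · simp only [mem_cons, not_or]
    exact ⟨G.ne_of_adj huw, fun h => hu (hTC h)⟩
  · intro z hz hzw
    exact (mem_filter.mp (hTnon ((mem_cons.mp hz).resolve_left hzw))).2

end SimpleGraph

theorem stmt5_general {V : Type} (r : ℕ) (hr : 2 ≤ r)
    (G : SimpleGraph V) [DecidableRel G.Adj]
    (hfree : ¬ ∃ (s : Finset V) (u w : V), G.IsNClique (r - 1) s ∧ u ∉ s ∧ w ∈ s ∧
      G.Adj u w ∧ ∀ z ∈ s, z ≠ w → ¬ G.Adj u z)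
    (C : Finset V) (hC : G.IsClique ↑C) :
    ∀ u ∉ C, (∃ w ∈ C, G.Adj u w) →
      (C.card : ℤ) - ((r : ℤ) - 3) ≤ ((C.filter fun w => G.Adj u w).card : ℤ) := by
  rintro u hu ⟨w, hw, huw⟩
  by_contra! hfew
  have hsplit := card_filter_add_card_filter_not (s := C) fun z => G.Adj u z
  have hnon : r - 2 ≤ #(C.filter fun z => ¬ G.Adj u z) := by omega
  obtain ⟨s, hs, hus, hws, hnonadj⟩ :=
    SimpleGraph.exists_isNClique_adj_unique_of_le_card_filter_not_adj hC hu hw huw hnon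
  rw [show r - 2 + 1 = r - 1 by omega] at hs
  exact hfree ⟨s, u, w, hs, hus, hws, huw, hnonadj⟩

/-- In a `(K_r \ K_{1,r-2})`-free graph, every vertex outside a clique `C` of size `> r²`
having a neighbor in `C` has at least `|C| - (r-3)` neighbors in `C`. -/
theorem stmt5 {V : Type} [Fintype V] [DecidableEq V] (r : ℕ) (hr : 2 ≤ r)
    (G : SimpleGraph V) [DecidableRel G.Adj]
    (hfree : ¬ ∃ (s : Finset V) (u w : V), G.IsNClique (r - 1) s ∧ u ∉ s ∧ w ∈ s ∧
      G.Adj u w ∧ ∀ z ∈ s, z ≠ w → ¬ G.Adj u z)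
    (C : Finset V) (hC : G.IsClique ↑C) (hcard : r ^ 2 < C.card) :
    ∀ u ∉ C, (∃ w ∈ C, G.Adj u w) →
      (C.card : ℤ) - ((r : ℤ) - 3) ≤ ((C.filter fun w => G.Adj u w).card : ℤ) :=
  stmt5_general r hr G hfree C hC
end

section
/- Let G be a connected graph, r ≥ 4, and suppose C ⊆ V(G) induces a clique with |C| > r². If G is (K_r \ K_{1,r-2})-free, then V(G) = C ∪ N(C); that is, every vertex of G is in C or has a neighbor in C. -/
/-!
Let `a ∉ C` have a neighbour `c ∈ C`. Then `c` together with the non-neighbours of `a` in `C` is a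
clique in which `a` sees only `c`; since an `(r-1)`-clique with such a pendant vertex is forbidden,
`a` misses at most `r - 3` vertices of `C`. If some `b` with no neighbour in `C` were adjacent to
`a`, then `a` together with its neighbours in `C` would be a clique in which `b` sees only `a`, so
`a` would also have at most `r - 3` neighbours in `C`. Hence `|C| ≤ 2r - 6 < r²`, a contradiction.
So `C ∪ N(C)` is closed under adjacency, and connectivity finishes the proof.
-/

namespace SimpleGraph

open Finset

variable {V : Type*}

/-- A copy of `K_{n+1} \ K_{1,n-1}`: an `n`-clique `s` and a vertex `u ∉ s` adjacent to exactly
one vertex `w` of `s`. -/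
def HasCliqueWithPendant (G : SimpleGraph V) (n : ℕ) : Prop :=
  ∃ (s : Finset V) (u w : V), G.IsNClique n s ∧ u ∉ s ∧ w ∈ s ∧ G.Adj u w ∧
    ∀ z ∈ s, z ≠ w → ¬ G.Adj u z

variable {G : SimpleGraph V} {n : ℕ}

lemma card_add_one_lt_of_not_hasCliqueWithPendant (h : ¬ G.HasCliqueWithPendant n) (hn : 0 < n)
    {S : Finset V} {x u : V} (hS : G.IsClique S) (hxS : ∀ y ∈ S, G.Adj x y) (huS : u ∉ S)
    (hux : G.Adj u x) (hu : ∀ z ∈ S, ¬ G.Adj u z) : #S + 1 < n := by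
  classical
  by_contra! hle
  obtain ⟨T, hTS, hT⟩ := exists_subset_card_eq (s := S) (n := n - 1) (by omega)
  have hxT : x ∉ T := fun hx => (hxS x (hTS hx)).ne rfl
  have hclique : G.IsClique (insert x T : Finset V) := by
    rw [coe_insert]
    exact (hS.subset (coe_subset.mpr hTS)).insert fun y hy _ => hxS y (hTS hy)
  refine h ⟨insert x T, u, x, ⟨hclique, ?_⟩, ?_, mem_insert_self x T, hux, ?_⟩
  · rw [card_insert_of_notMem hxT, hT]
    omega
  · rw [mem_insert, not_or]
    exact ⟨hux.ne, fun hmem => huS (hTS hmem)⟩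
  · intro z hz hzx
    exact hu z (hTS ((mem_insert.mp hz).resolve_left hzx))

variable {C : Finset V}

section

variable [DecidableRel G.Adj]

lemma card_filter_not_adj_add_one_lt (h : ¬ G.HasCliqueWithPendant n) (hn : 0 < n)
    (hC : G.IsClique C) {a c : V} (ha : a ∉ C) (hc : c ∈ C) (hac : G.Adj a c) :
    #{z ∈ C | ¬ G.Adj a z} + 1 < n := by
  refine card_add_one_lt_of_not_hasCliqueWithPendant h hn
    (hC.subset (coe_subset.mpr (filter_subset _ _))) (fun y hy => ?_)
    (fun hmem => ha (mem_of_mem_filter a hmem)) hac (fun z hz => (mem_filter.mp hz).2)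
  obtain ⟨hyC, hay⟩ := mem_filter.mp hy
  exact hC hc hyC fun hcy => hay (hcy ▸ hac)

lemma card_filter_adj_add_one_lt (h : ¬ G.HasCliqueWithPendant n) (hn : 0 < n)
    (hC : G.IsClique C) {a b : V} (hb : b ∉ C) (hba : G.Adj b a) (hbC : ∀ z ∈ C, ¬ G.Adj b z) :
    #{z ∈ C | G.Adj a z} + 1 < n :=
  card_add_one_lt_of_not_hasCliqueWithPendant h hn
    (hC.subset (coe_subset.mpr (filter_subset _ _)))
    (fun _ hy => (mem_filter.mp hy).2) (fun hmem => hb (mem_of_mem_filter b hmem))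
    hba (fun z hz => hbC z (mem_of_mem_filter z hz))

end

lemma exists_adj_of_adj_of_not_hasCliqueWithPendant (h : ¬ G.HasCliqueWithPendant n)
    (hn : 0 < n) (hC : G.IsClique C) (hcard : 2 * n < #C + 4) {a b c : V} (ha : a ∉ C)
    (hc : c ∈ C) (hac : G.Adj a c) (hab : G.Adj a b) (hb : b ∉ C) : ∃ w ∈ C, G.Adj b w := by
  classical
  by_contra! hbC
  have hnonadj := card_filter_not_adj_add_one_lt h hn hC ha hc hac
  have hadj := card_filter_adj_add_one_lt h hn hC hb hab.symm hbC
  have hsplit := card_filter_add_card_filter_not (s := C) (p := fun z => G.Adj a z)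
  omega

lemma Preconnected.forall_of_adj_imp (hG : G.Preconnected) {P : V → Prop} {v₀ : V} (h₀ : P v₀)
    (hstep : ∀ a b, G.Adj a b → P a → P b) (v : V) : P v := by
  obtain ⟨p⟩ := hG v₀ v
  induction p with
  | nil => exact h₀
  | cons hadj _ ih => exact ih (hstep _ _ hadj h₀)

end SimpleGraph

open SimpleGraph in
theorem stmt6_general {V : Type} (r : ℕ) (hr : 4 ≤ r)
    (G : SimpleGraph V) (hconn : G.Connected)
    (hfree : ¬ ∃ (s : Finset V) (u w : V), G.IsNClique (r - 1) s ∧ u ∉ s ∧ w ∈ s ∧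
      G.Adj u w ∧ ∀ z ∈ s, z ≠ w → ¬ G.Adj u z)
    (C : Finset V) (hC : G.IsClique ↑C) (hcard : r ^ 2 < C.card) :
    ∀ v : V, v ∈ C ∨ ∃ w ∈ C, G.Adj v w := by
  obtain ⟨c₀, hc₀⟩ := Finset.card_pos.mp (Nat.zero_lt_of_lt hcard)
  have hsmall : 2 * (r - 1) < C.card + 4 := by
    have : 2 * r ≤ r ^ 2 := by nlinarith
    omega
  refine hconn.preconnected.forall_of_adj_imp (Or.inl hc₀) fun a b hab => ?_
  rintro (haC | ⟨c, hc, hac⟩)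
  · exact Or.inr ⟨a, haC, hab.symm⟩
  by_cases haC : a ∈ C
  · exact Or.inr ⟨a, haC, hab.symm⟩
  by_cases hbC : b ∈ C
  · exact Or.inl hbC
  exact Or.inr (exists_adj_of_adj_of_not_hasCliqueWithPendant hfree (by omega) hC hsmall haC hc
    hac hab hbC)

/-- In a connected `(K_r \ K_{1,r-2})`-free graph (`r ≥ 4`) containing a clique `C` of size
`> r²`, every vertex is in `C` or has a neighbor in `C`. -/
theorem stmt6 {V : Type} [Fintype V] [DecidableEq V] (r : ℕ) (hr : 4 ≤ r)
    (G : SimpleGraph V) (hconn : G.Connected)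
    (hfree : ¬ ∃ (s : Finset V) (u w : V), G.IsNClique (r - 1) s ∧ u ∉ s ∧ w ∈ s ∧
      G.Adj u w ∧ ∀ z ∈ s, z ≠ w → ¬ G.Adj u z)
    (C : Finset V) (hC : G.IsClique ↑C) (hcard : r ^ 2 < C.card) :
    ∀ v : V, v ∈ C ∨ ∃ w ∈ C, G.Adj v w :=
  stmt6_general r hr G hconn hfree C hC hcard
end

section
/- Let r ≥ 4 and G be a (K_r \ K_{1,2})-free graph with a clique C, |C| > r. Let B = {u ∈ N(C) : |N(u) ∩ C| = |C| - 1}. Then the graph induced by C ∪ B is a complete multipartite graph: for u,v ∈ B, if N(u) ∩ C = N(v) ∩ C then uv ∉ E(G), and if N(u) ∩ C ≠ N(v) ∩ C then uv ∈ E(G). -/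
/-!
Fix the vertex `x ∈ C` that `u` misses and the vertex `y ∈ C` that `v` misses. If `x = y` and
`uv` were an edge, `u`, `v` and `r - 3` further vertices of `C - x` would form an `(r - 1)`-clique
from which `x` misses exactly `u` and `v`. If `x ≠ y` and `uv` were a non-edge, `v`, `x` and
`r - 3` vertices of `C - x - y` would form an `(r - 1)`-clique from which `u` misses exactly `v`
and `x`. Both are copies of `K_r \ K_{1,2}`.
-/

namespace Finset

variable {α : Type*} [DecidableEq α] {s : Finset α} {p : α → Prop} [DecidablePred p]

theorem exists_filter_eq_erase_of_card_filter_eq (hs : s.Nonempty)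
    (h : (s.filter p).card = s.card - 1) : ∃ x ∈ s, s.filter p = s.erase x := by
  have hsub : s.filter p ⊆ s := filter_subset p s
  have hsdiff : (s \ s.filter p).card = 1 := by
    rw [card_sdiff_of_subset hsub, h]
    have := hs.card_pos
    omega
  obtain ⟨x, hx, hxs⟩ := (covBy_iff_card_sdiff_eq_one.mpr ⟨hsub, hsdiff⟩).exists_finset_erase
  exact ⟨x, hx, hxs.symm⟩

theorem filter_eq_erase_iff {x : α} : s.filter p = s.erase x ↔ ∀ z ∈ s, (p z ↔ z ≠ x) := by
  simp only [Finset.ext_iff, mem_filter, mem_erase]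
  grind

end Finset

namespace SimpleGraph

open Finset

variable {V : Type*} (G : SimpleGraph V)

/-- `G` contains `K_{n+1}` minus two incident edges: an `n`-clique `s` and an apex `u ∉ s`
adjacent to every vertex of `s` except `z₁` and `z₂`. -/
def HasCliqueMinusCherry (n : ℕ) : Prop :=
  ∃ (s : Finset V) (u z₁ z₂ : V), G.IsNClique n s ∧ u ∉ s ∧
    z₁ ∈ s ∧ z₂ ∈ s ∧ z₁ ≠ z₂ ∧ ¬ G.Adj u z₁ ∧ ¬ G.Adj u z₂ ∧
    ∀ z ∈ s, z ≠ z₁ → z ≠ z₂ → G.Adj u z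

variable {G}

theorem IsClique.exists_isNClique_subset {s : Finset V} {n : ℕ} (hs : G.IsClique (s : Set V))
    (hn : n ≤ s.card) : ∃ t ⊆ s, G.IsNClique n t := by
  obtain ⟨t, hts, htn⟩ := exists_subset_card_eq hn
  exact ⟨t, hts, ⟨hs.subset (by exact_mod_cast hts), htn⟩⟩

theorem hasCliqueMinusCherry_of_isNClique [DecidableEq V] {n : ℕ} {T : Finset V} {u z₁ z₂ : V}
    (hT : G.IsNClique n T) (h₁₂ : G.Adj z₁ z₂) (h₁ : ∀ t ∈ T, G.Adj z₁ t)
    (h₂ : ∀ t ∈ T, G.Adj z₂ t) (hu : ∀ t ∈ T, G.Adj u t) (hu₁ : ¬ G.Adj u z₁)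
    (hu₂ : ¬ G.Adj u z₂) (hne₁ : u ≠ z₁) (hne₂ : u ≠ z₂) :
    G.HasCliqueMinusCherry (n + 2) := by
  have hs : G.IsNClique (n + 2) (insert z₁ (insert z₂ T)) :=
    (hT.insert h₂).insert (by simpa [h₁₂] using h₁)
  refine ⟨_, u, z₁, z₂, hs, ?_, mem_insert_self _ _, mem_insert_of_mem (mem_insert_self _ _),
    h₁₂.ne, hu₁, hu₂, ?_⟩
  · simp only [mem_insert, not_or]
    exact ⟨hne₁, hne₂, fun huT => (hu u huT).ne rfl⟩
  · intro z hz hz₁ hz₂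
    simp only [mem_insert, hz₁, hz₂, false_or] at hz
    exact hu z hz

variable [DecidableEq V] {n : ℕ} {C : Finset V} {u v x y : V}

theorem not_adj_of_same_missing_vertex (hfree : ¬ G.HasCliqueMinusCherry (n + 2))
    (hC : G.IsClique (C : Set V)) (hn : n + 1 ≤ C.card) (hu : u ∉ C) (hv : v ∉ C) (hx : x ∈ C)
    (hux : ∀ z ∈ C, (G.Adj u z ↔ z ≠ x)) (hvx : ∀ z ∈ C, (G.Adj v z ↔ z ≠ x)) :
    ¬ G.Adj u v := by
  intro huv
  obtain ⟨T, hTC, hT⟩ := (hC.subset (coe_subset.mpr (C.erase_subset x))).exists_isNClique_subset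
    (n := n) (by rw [card_erase_of_mem hx]; omega)
  have hT_mem : ∀ t ∈ T, t ∈ C ∧ t ≠ x := fun t ht => (mem_erase.mp (hTC ht)).symm
  refine hfree (hasCliqueMinusCherry_of_isNClique (u := x) hT huv
    (fun t ht => (hux t (hT_mem t ht).1).mpr (hT_mem t ht).2)
    (fun t ht => (hvx t (hT_mem t ht).1).mpr (hT_mem t ht).2)
    (fun t ht => hC hx (hT_mem t ht).1 (hT_mem t ht).2.symm) ?_ ?_ ?_ ?_)
  · exact fun h => (hux x hx).mp h.symm rfl
  · exact fun h => (hvx x hx).mp h.symm rfl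
  · exact fun h => hu (h ▸ hx)
  · exact fun h => hv (h ▸ hx)

theorem adj_of_distinct_missing_vertices (hfree : ¬ G.HasCliqueMinusCherry (n + 2))
    (hC : G.IsClique (C : Set V)) (hn : n + 2 ≤ C.card) (hu : u ∉ C) (hx : x ∈ C) (hy : y ∈ C)
    (hxy : x ≠ y) (hux : ∀ z ∈ C, (G.Adj u z ↔ z ≠ x)) (hvy : ∀ z ∈ C, (G.Adj v z ↔ z ≠ y)) :
    G.Adj u v := by
  by_contra huv
  have hCxy : ((C.erase x).erase y).card = C.card - 2 := by
    rw [card_erase_of_mem (mem_erase.mpr ⟨hxy.symm, hy⟩), card_erase_of_mem hx]; rfl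
  obtain ⟨T, hTC, hT⟩ := (hC.subset (coe_subset.mpr
    ((erase_subset y _).trans (C.erase_subset x)))).exists_isNClique_subset (n := n) (by omega)
  have hT_mem : ∀ t ∈ T, t ∈ C ∧ t ≠ x ∧ t ≠ y := fun t ht => by
    have := hTC ht
    simp only [mem_erase] at this
    tauto
  have hvx : G.Adj v x := (hvy x hx).mpr hxy
  refine hfree (hasCliqueMinusCherry_of_isNClique (u := u) hT hvx
    (fun t ht => (hvy t (hT_mem t ht).1).mpr (hT_mem t ht).2.2)
    (fun t ht => hC hx (hT_mem t ht).1 (hT_mem t ht).2.1.symm)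
    (fun t ht => (hux t (hT_mem t ht).1).mpr (hT_mem t ht).2.1) huv ?_ ?_ ?_)
  · exact fun h => (hux x hx).mp h rfl
  · rintro rfl
    exact (hvy y hy).mp ((hux y hy).mpr hxy.symm) rfl
  · exact fun h => hu (h ▸ hx)

end SimpleGraph

theorem stmt9_general {V : Type} [DecidableEq V] (r : ℕ) (hr : 4 ≤ r)
    (G : SimpleGraph V) [DecidableRel G.Adj]
    (hfree : ¬ ∃ (s : Finset V) (u z₁ z₂ : V), G.IsNClique (r - 1) s ∧ u ∉ s ∧
      z₁ ∈ s ∧ z₂ ∈ s ∧ z₁ ≠ z₂ ∧ ¬ G.Adj u z₁ ∧ ¬ G.Adj u z₂ ∧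
      ∀ z ∈ s, z ≠ z₁ → z ≠ z₂ → G.Adj u z)
    (C : Finset V) (hC : G.IsClique ↑C) (hcard : r < C.card) :
    ∀ u v : V, u ∉ C → v ∉ C → u ≠ v →
      (C.filter fun w => G.Adj u w).card = C.card - 1 →
      (C.filter fun w => G.Adj v w).card = C.card - 1 →
      (((C.filter fun w => G.Adj u w) = (C.filter fun w => G.Adj v w) → ¬ G.Adj u v) ∧
       ((C.filter fun w => G.Adj u w) ≠ (C.filter fun w => G.Adj v w) → G.Adj u v)) := by
  intro u v hu hv _ hcu hcv
  have hfree' : ¬ G.HasCliqueMinusCherry (r - 3 + 2) := by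
    rwa [show r - 3 + 2 = r - 1 by omega]
  have hC₀ : C.Nonempty := Finset.card_pos.mp (by omega)
  obtain ⟨x, hx, hux⟩ := Finset.exists_filter_eq_erase_of_card_filter_eq hC₀ hcu
  obtain ⟨y, hy, hvy⟩ := Finset.exists_filter_eq_erase_of_card_filter_eq hC₀ hcv
  rw [hux, hvy, ne_eq, Finset.erase_inj _ hx]
  rw [Finset.filter_eq_erase_iff] at hux hvy
  constructor
  · rintro rfl
    exact SimpleGraph.not_adj_of_same_missing_vertex hfree' hC (by omega) hu hv hx hux hvy
  · exact fun hxy =>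
      SimpleGraph.adj_of_distinct_missing_vertices hfree' hC (by omega) hu hx hy hxy hux hvy

/-- In a `(K_r \ K_{1,2})`-free graph (`r ≥ 4`) with a clique `C`, `|C| > r`: for vertices
`u, v` outside `C` each adjacent to all but one vertex of `C`, if they have the same trace on
`C` they are non-adjacent, and if different traces, they are adjacent (so `C ∪ B` is complete
multipartite). -/
theorem stmt9 {V : Type} [Fintype V] [DecidableEq V] (r : ℕ) (hr : 4 ≤ r)
    (G : SimpleGraph V) [DecidableRel G.Adj]
    (hfree : ¬ ∃ (s : Finset V) (u z₁ z₂ : V), G.IsNClique (r - 1) s ∧ u ∉ s ∧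
      z₁ ∈ s ∧ z₂ ∈ s ∧ z₁ ≠ z₂ ∧ ¬ G.Adj u z₁ ∧ ¬ G.Adj u z₂ ∧
      ∀ z ∈ s, z ≠ z₁ → z ≠ z₂ → G.Adj u z)
    (C : Finset V) (hC : G.IsClique ↑C) (hcard : r < C.card) :
    ∀ u v : V, u ∉ C → v ∉ C → u ≠ v →
      (C.filter fun w => G.Adj u w).card = C.card - 1 →
      (C.filter fun w => G.Adj v w).card = C.card - 1 →
      (((C.filter fun w => G.Adj u w) = (C.filter fun w => G.Adj v w) → ¬ G.Adj u v) ∧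
       ((C.filter fun w => G.Adj u w) ≠ (C.filter fun w => G.Adj v w) → G.Adj u v)) :=
  stmt9_general r hr G hfree C hC hcard
end

section
/- Let G be a complete multipartite graph with parts S_1,...,S_m ordered so that |S_1| ≥ ... ≥ |S_m|, together with an additional vertex set D, where every vertex of D has neighbors in at most r-4 of the parts S_i, and m > (k-1)(r-4)+1. Let G' be obtained by deleting all parts S_{q+1},...,S_m where q = (k-1)(r-4)+1. If G has an independent set of size k, then G' has an independent set of size k. -/
/-!
The vertices of an independent set `s` outside `D` all lie in one part `S i`, since distinct parts
are completely joined. If `i` is beyond the first `q = (k-1)(r-4)+1` parts, then `s` has at most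
`k - 1` vertices in `D`, which together see at most `(k-1)(r-4) < q` parts; so some part `S j` with
`j < q` is seen by none of them. As `|S j| ≥ |S i|`, the vertices of `s` in `S i` can be traded
for equally many vertices of `S j`.
-/

open Finset

variable {V : Type} {G : SimpleGraph V} {D s : Finset V}

theorem IsIndep.union {A B : Set V} (hA : IsIndep G A) (hB : IsIndep G B)
    (hAB : ∀ a ∈ A, ∀ b ∈ B, ¬ G.Adj a b) : IsIndep G (A ∪ B) :=
  Set.pairwise_union.mpr
    ⟨hA, hB, fun a ha b hb _ => ⟨hAB a ha b hb, fun h => hAB a ha b hb h.symm⟩⟩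

theorem IsIndep.mono {A B : Set V} (hB : IsIndep G B) (hAB : A ⊆ B) : IsIndep G A :=
  Set.Pairwise.mono hAB hB

theorem Fin.exists_val_lt_notMem_of_card_lt {m q : ℕ} (T : Finset (Fin m)) (hqm : q ≤ m)
    (hT : #T < q) : ∃ j : Fin m, j.val < q ∧ j ∉ T := by
  obtain ⟨n, hn, hnT⟩ :=
    exists_mem_notMem_of_card_lt_card (s := T.map Fin.valEmbedding) (t := range q) (by simpa)
  have hnq : n < q := mem_range.mp hn
  exact ⟨⟨n, by omega⟩, hnq, fun hT => hnT (mem_map_of_mem _ hT)⟩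

theorem IsIndep.exists_card_eq_subset_union [DecidableEq V] {P : Finset V}
    (hs : IsIndep G ↑s) (hP : IsIndep G ↑P) (hPD : Disjoint P D)
    (hnadj : ∀ d ∈ s ∩ D, ∀ w ∈ P, ¬ G.Adj d w)
    (hcard : #(s \ D) ≤ #P) : ∃ t : Finset V, IsIndep G ↑t ∧ #t = #s ∧ t ⊆ D ∪ P := by
  obtain ⟨t, htP, htcard⟩ := exists_subset_card_eq hcard
  have hindep : IsIndep G ↑(s ∩ D ∪ t) := by
    rw [coe_union]
    exact (hs.mono (coe_subset.mpr inter_subset_left)).union (hP.mono (coe_subset.mpr htP))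
      fun d hd w hw => hnadj d hd w (htP hw)
  have hdisj : Disjoint (s ∩ D) t :=
    disjoint_of_subset_left inter_subset_right (hPD.mono_left htP).symm
  refine ⟨s ∩ D ∪ t, hindep, ?_, union_subset_union inter_subset_right htP⟩
  rw [card_union_of_disjoint hdisj, htcard, card_inter_add_card_sdiff]

section Parts

variable {ι : Type} {S : ι → Finset V}

def seenParts (G : SimpleGraph V) [DecidableRel G.Adj] [Fintype ι] (S : ι → Finset V) (d : V) :
    Finset ι :=
  univ.filter fun i => ∃ w ∈ S i, G.Adj d w

theorem not_adj_of_notMem_seenParts [DecidableRel G.Adj] [Fintype ι] {d w : V} {i : ι}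
    (hi : i ∉ seenParts G S d) (hw : w ∈ S i) : ¬ G.Adj d w :=
  fun hdw => hi (mem_filter.mpr ⟨mem_univ i, w, hw, hdw⟩)

theorem IsIndep.eq_of_mem_parts
    (hcomplete : ∀ i j, i ≠ j → ∀ u ∈ S i, ∀ v ∈ S j, G.Adj u v) (hs : IsIndep G ↑s)
    {u v : V} (hu : u ∈ s) (hv : v ∈ s) {i j : ι} (hui : u ∈ S i)
    (hvj : v ∈ S j) : i = j := by
  by_contra hij
  have huv := hcomplete i j hij u hui v hvj
  exact hs hu hv huv.ne huv

theorem IsIndep.exists_sdiff_subset_part [DecidableEq V]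
    (hpart : ∀ v, v ∈ D ∨ ∃ i, v ∈ S i)
    (hcomplete : ∀ i j, i ≠ j → ∀ u ∈ S i, ∀ v ∈ S j, G.Adj u v) (hs : IsIndep G ↑s)
    (hne : (s \ D).Nonempty) : ∃ i, s \ D ⊆ S i := by
  have hmem : ∀ v ∈ s \ D, ∃ i, v ∈ S i := fun v hv =>
    (hpart v).resolve_left (mem_sdiff.mp hv).2
  obtain ⟨v, hv⟩ := hne
  obtain ⟨i, hvi⟩ := hmem v hv
  refine ⟨i, fun u hu => ?_⟩
  obtain ⟨j, huj⟩ := hmem u hu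
  rwa [hs.eq_of_mem_parts hcomplete (mem_sdiff.mp hv).1 (mem_sdiff.mp hu).1 hvi huj]

end Parts

theorem stmt10_general {V : Type}
    (G : SimpleGraph V) [DecidableRel G.Adj]
    (r k m : ℕ)
    (S : Fin m → Finset V) (D : Finset V)
    (hSD : ∀ i, Disjoint (S i) D)
    (hpart : ∀ v : V, v ∈ D ∨ ∃ i, v ∈ S i)
    (hsorted : ∀ i j : Fin m, i ≤ j → (S j).card ≤ (S i).card)
    (hparts_indep : ∀ i, ∀ u ∈ S i, ∀ v ∈ S i, ¬ G.Adj u v)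
    (hcomplete : ∀ i j, i ≠ j → ∀ u ∈ S i, ∀ v ∈ S j, G.Adj u v)
    (hD : ∀ d ∈ D,
      (Finset.univ.filter fun i : Fin m => ∃ w ∈ S i, G.Adj d w).card ≤ r - 4)
    (hex : ∃ s : Finset V, IsIndep G ↑s ∧ s.card = k) :
    ∃ s : Finset V, IsIndep G ↑s ∧ s.card = k ∧
      ∀ v ∈ s, v ∈ D ∨ ∃ i : Fin m, i.val < (k - 1) * (r - 4) + 1 ∧ v ∈ S i := by
  classical
  obtain ⟨s, hs, hsk⟩ := hex
  rcases (s \ D).eq_empty_or_nonempty with hsD | hsD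
  · exact ⟨s, hs, hsk, fun v hv => Or.inl (sdiff_eq_empty_iff_subset.mp hsD hv)⟩
  obtain ⟨i, hi⟩ := hs.exists_sdiff_subset_part hpart hcomplete hsD
  by_cases hiq : i.val < (k - 1) * (r - 4) + 1
  · refine ⟨s, hs, hsk, fun v hv => or_iff_not_imp_left.mpr fun hvD => ?_⟩
    exact ⟨i, hiq, hi (mem_sdiff.mpr ⟨hv, hvD⟩)⟩
  have hinD : #(s ∩ D) ≤ k - 1 := by
    have := card_inter_add_card_sdiff s D
    have := hsD.card_pos
    omega
  have hseen : #((s ∩ D).biUnion (seenParts G S)) ≤ (k - 1) * (r - 4) :=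
    (card_biUnion_le_card_mul _ _ _ fun d hd => hD d (mem_inter.mp hd).2).trans
      (Nat.mul_le_mul_right _ hinD)
  obtain ⟨j, hjq, hj⟩ :=
    Fin.exists_val_lt_notMem_of_card_lt ((s ∩ D).biUnion (seenParts G S))
      ((not_lt.mp hiq).trans i.isLt.le) (Nat.lt_succ_of_le hseen)
  have hji : j ≤ i := Fin.le_def.mpr (by omega)
  obtain ⟨t, ht, htcard, htsub⟩ := hs.exists_card_eq_subset_union
    (fun u hu v hv _ => hparts_indep j u hu v hv) (hSD j)
    (fun d hd _ hw =>
      not_adj_of_notMem_seenParts (fun hjd => hj (mem_biUnion.mpr ⟨d, hd, hjd⟩)) hw)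
    ((card_le_card hi).trans (hsorted j i hji))
  refine ⟨t, ht, htcard.trans hsk, fun v hv => ?_⟩
  rcases mem_union.mp (htsub hv) with hvD | hvj
  · exact Or.inl hvD
  · exact Or.inr ⟨j, hjq, hvj⟩

/-- Complete multipartite graph with parts `S_1 ⊇ ... ⊇ S_m` (in size) plus a set `D`, each
vertex of `D` seeing at most `r-4` parts. Deleting the parts beyond the first
`q = (k-1)(r-4)+1` preserves the existence of an independent set of size `k`. -/
theorem stmt10 {V : Type} [Fintype V] [DecidableEq V]
    (G : SimpleGraph V) [DecidableRel G.Adj]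
    (r k m : ℕ) (hr : 4 ≤ r) (hk : 1 ≤ k) (hm : (k - 1) * (r - 4) + 1 < m)
    (S : Fin m → Finset V) (D : Finset V)
    (hSne : ∀ i, (S i).Nonempty)
    (hSdisj : ∀ i j, i ≠ j → Disjoint (S i) (S j))
    (hSD : ∀ i, Disjoint (S i) D)
    (hpart : ∀ v : V, v ∈ D ∨ ∃ i, v ∈ S i)
    (hsorted : ∀ i j : Fin m, i ≤ j → (S j).card ≤ (S i).card)
    (hparts_indep : ∀ i, ∀ u ∈ S i, ∀ v ∈ S i, ¬ G.Adj u v)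
    (hcomplete : ∀ i j, i ≠ j → ∀ u ∈ S i, ∀ v ∈ S j, G.Adj u v)
    (hD : ∀ d ∈ D,
      (Finset.univ.filter fun i : Fin m => ∃ w ∈ S i, G.Adj d w).card ≤ r - 4)
    (hex : ∃ s : Finset V, IsIndep G ↑s ∧ s.card = k) :
    ∃ s : Finset V, IsIndep G ↑s ∧ s.card = k ∧
      ∀ v ∈ s, v ∈ D ∨ ∃ i : Fin m, i.val < (k - 1) * (r - 4) + 1 ∧ v ∈ S i :=
  stmt10_general G r k m S D hSD hpart hsorted hparts_indep hcomplete hD hex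
end

section
/- Let A, B, C be three cliques in a graph, pairwise disjoint, each with vertices indexed 1..n, such that the edges between A and B are exactly {a_x b_y : x > y} and the edges between B and C are exactly {b_x c_y : x > y} (half-graphs), with no edges between A and C. Then the graph induced by A ∪ B ∪ C is claw-free. -/
/-!
Claw-freeness is local: a claw centred at `v` is an independent triple in the neighbourhood of
`v`, and no such triple fits into a union of two cliques. The neighbourhood of `a x` lies in
`A ∪ B`, that of `c x` in `B ∪ C`, and that of `b x` in the union of the cliques
`{a y | x < y} ∪ {b z | z ≤ x}` and `{b z | x ≤ z} ∪ {c y | y < x}`: the half-graph orders make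
`b x` the threshold on both sides.
-/

open Set

namespace SimpleGraph

variable {V ι : Type*} {G : SimpleGraph V}

theorem isClique_range_of_adj_iff_ne {f : ι → V} (hf : ∀ x y, G.Adj (f x) (f y) ↔ x ≠ y) :
    G.IsClique (range f) := by
  rintro _ ⟨x, rfl⟩ _ ⟨y, rfl⟩ hne
  exact (hf x y).2 fun h => hne (congrArg f h)

theorem isClique_image_union_image {f g : ι → V} {s t : Set ι} (hf : G.IsClique (range f))
    (hg : G.IsClique (range g)) (hfg : ∀ x ∈ s, ∀ y ∈ t, G.Adj (f x) (g y)) :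
    G.IsClique (f '' s ∪ g '' t) := by
  refine pairwise_union.2
    ⟨hf.subset (image_subset_range f s), hg.subset (image_subset_range g t), ?_⟩
  rintro _ ⟨x, hx, rfl⟩ _ ⟨y, hy, rfl⟩ -
  exact ⟨hfg x hx y hy, (hfg x hx y hy).symm⟩

theorem false_of_isClique_of_isClique_of_indep_triple {S T : Set V} (hS : G.IsClique S)
    (hT : G.IsClique T) {u₁ u₂ u₃ : V} (h₁ : u₁ ∈ S ∪ T) (h₂ : u₂ ∈ S ∪ T) (h₃ : u₃ ∈ S ∪ T)
    (h₁₂ : u₁ ≠ u₂) (h₁₃ : u₁ ≠ u₃) (h₂₃ : u₂ ≠ u₃)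
    (n₁₂ : ¬ G.Adj u₁ u₂) (n₁₃ : ¬ G.Adj u₁ u₃) (n₂₃ : ¬ G.Adj u₂ u₃) : False := by
  rcases h₁ with h₁ | h₁ <;> rcases h₂ with h₂ | h₂ <;> rcases h₃ with h₃ | h₃
  all_goals first
    | exact n₁₂ (hS h₁ h₂ h₁₂) | exact n₁₂ (hT h₁ h₂ h₁₂)
    | exact n₁₃ (hS h₁ h₃ h₁₃) | exact n₁₃ (hT h₁ h₃ h₁₃)
    | exact n₂₃ (hS h₂ h₃ h₂₃) | exact n₂₃ (hT h₂ h₃ h₂₃)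

section HalfGraphs

variable {a b c : ι → V}

theorem neighborSet_left_inter_subset (hac : ∀ x y, ¬ G.Adj (a x) (c y)) (x : ι) :
    G.neighborSet (a x) ∩ (range a ∪ range b ∪ range c) ⊆ range a ∪ range b := by
  rintro _ ⟨hadj, (hu | hu) | ⟨y, rfl⟩⟩
  exacts [Or.inl hu, Or.inr hu, (hac x y hadj).elim]

theorem neighborSet_right_inter_subset (hac : ∀ x y, ¬ G.Adj (a x) (c y)) (x : ι) :
    G.neighborSet (c x) ∩ (range a ∪ range b ∪ range c) ⊆ range b ∪ range c := by
  rintro _ ⟨hadj, (⟨y, rfl⟩ | hu) | hu⟩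
  exacts [(hac y x hadj.symm).elim, Or.inl hu, Or.inr hu]

theorem neighborSet_middle_inter_subset [LinearOrder ι] (hab : ∀ x y, G.Adj (a x) (b y) ↔ y < x)
    (hbc : ∀ x y, G.Adj (b x) (c y) ↔ y < x) (x : ι) :
    G.neighborSet (b x) ∩ (range a ∪ range b ∪ range c) ⊆
      (a '' Ioi x ∪ b '' Iic x) ∪ (b '' Ici x ∪ c '' Iio x) := by
  rintro _ ⟨hadj, (⟨y, rfl⟩ | ⟨y, rfl⟩) | ⟨y, rfl⟩⟩
  · exact Or.inl (Or.inl ⟨y, (hab y x).1 hadj.symm, rfl⟩)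
  · rcases le_total y x with hyx | hxy
    exacts [Or.inl (Or.inr ⟨y, hyx, rfl⟩), Or.inr (Or.inl ⟨y, hxy, rfl⟩)]
  · exact Or.inr (Or.inr ⟨y, (hbc x y).1 hadj, rfl⟩)

end HalfGraphs

end SimpleGraph

open SimpleGraph

theorem stmt13_general {V : Type} (G : SimpleGraph V) (n : ℕ) (a b c : Fin n → V)
    (haa : ∀ x y, G.Adj (a x) (a y) ↔ x ≠ y)
    (hbb : ∀ x y, G.Adj (b x) (b y) ↔ x ≠ y)
    (hcc : ∀ x y, G.Adj (c x) (c y) ↔ x ≠ y)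
    (hab : ∀ x y, G.Adj (a x) (b y) ↔ y < x)
    (hbc : ∀ x y, G.Adj (b x) (c y) ↔ y < x)
    (hac : ∀ x y, ¬ G.Adj (a x) (c y)) :
    ¬ ∃ v u₁ u₂ u₃ : V,
      v ∈ Set.range a ∪ Set.range b ∪ Set.range c ∧
      u₁ ∈ Set.range a ∪ Set.range b ∪ Set.range c ∧
      u₂ ∈ Set.range a ∪ Set.range b ∪ Set.range c ∧
      u₃ ∈ Set.range a ∪ Set.range b ∪ Set.range c ∧
      u₁ ≠ u₂ ∧ u₁ ≠ u₃ ∧ u₂ ≠ u₃ ∧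
      G.Adj v u₁ ∧ G.Adj v u₂ ∧ G.Adj v u₃ ∧
      ¬ G.Adj u₁ u₂ ∧ ¬ G.Adj u₁ u₃ ∧ ¬ G.Adj u₂ u₃ := by
  rintro ⟨v, u₁, u₂, u₃, hv, h₁, h₂, h₃, h₁₂, h₁₃, h₂₃, a₁, a₂, a₃, n₁₂, n₁₃, n₂₃⟩
  have no_cover : ∀ S T : Set V, G.IsClique S → G.IsClique T →
      ¬ G.neighborSet v ∩ (range a ∪ range b ∪ range c) ⊆ S ∪ T := fun S T hS hT hcover =>
    false_of_isClique_of_isClique_of_indep_triple hS hT (hcover ⟨a₁, h₁⟩) (hcover ⟨a₂, h₂⟩)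
      (hcover ⟨a₃, h₃⟩) h₁₂ h₁₃ h₂₃ n₁₂ n₁₃ n₂₃
  have hA := isClique_range_of_adj_iff_ne haa
  have hB := isClique_range_of_adj_iff_ne hbb
  have hC := isClique_range_of_adj_iff_ne hcc
  rcases hv with (⟨x, rfl⟩ | ⟨x, rfl⟩) | ⟨x, rfl⟩
  · exact no_cover _ _ hA hB (neighborSet_left_inter_subset hac x)
  · refine no_cover _ _ ?_ ?_ (neighborSet_middle_inter_subset hab hbc x)
    · exact isClique_image_union_image hA hB fun y hy z hz => (hab y z).2 (hz.trans_lt hy)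
    · exact isClique_image_union_image hB hC fun y hy z hz => (hbc y z).2 (hz.trans_le hy)
  · exact no_cover _ _ hB hC (neighborSet_right_inter_subset hac x)

/-- Three disjoint cliques `A`, `B`, `C`, with half-graphs between `A,B` and `B,C` and no
edges between `A` and `C`: the induced graph on `A ∪ B ∪ C` is claw-free. -/
theorem stmt13 {V : Type} (G : SimpleGraph V) (n : ℕ) (a b c : Fin n → V)
    (hab_ne : ∀ x y, a x ≠ b y) (hac_ne : ∀ x y, a x ≠ c y) (hbc_ne : ∀ x y, b x ≠ c y)
    (haa : ∀ x y, G.Adj (a x) (a y) ↔ x ≠ y)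
    (hbb : ∀ x y, G.Adj (b x) (b y) ↔ x ≠ y)
    (hcc : ∀ x y, G.Adj (c x) (c y) ↔ x ≠ y)
    (hab : ∀ x y, G.Adj (a x) (b y) ↔ y < x)
    (hbc : ∀ x y, G.Adj (b x) (c y) ↔ y < x)
    (hac : ∀ x y, ¬ G.Adj (a x) (c y)) :
    ¬ ∃ v u₁ u₂ u₃ : V,
      v ∈ Set.range a ∪ Set.range b ∪ Set.range c ∧
      u₁ ∈ Set.range a ∪ Set.range b ∪ Set.range c ∧
      u₂ ∈ Set.range a ∪ Set.range b ∪ Set.range c ∧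
      u₃ ∈ Set.range a ∪ Set.range b ∪ Set.range c ∧
      u₁ ≠ u₂ ∧ u₁ ≠ u₃ ∧ u₂ ≠ u₃ ∧
      G.Adj v u₁ ∧ G.Adj v u₂ ∧ G.Adj v u₃ ∧
      ¬ G.Adj u₁ u₂ ∧ ¬ G.Adj u₁ u₃ ∧ ¬ G.Adj u₂ u₃ :=
  stmt13_general G n a b c haa hbb hcc hab hbc hac
end

section
/- Let C_1,...,C_m (m ≥ 3) be pairwise disjoint cliques arranged in a cycle, each with vertices indexed 1..n, where between consecutive cliques C_i and C_{i+1} (indices mod m) the edges are exactly the half-graph {x-th vertex of C_i adjacent to y-th vertex of C_{i+1} iff x > y}, and there are no other edges. If K is an independent set of size m in the union, then K contains exactly one vertex from each clique and all these vertices have the same index. -/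
/-!
Two vertices of one clique are adjacent, so an independent set of size `m` meets every clique
exactly once and is the graph of a function `g : Fin m → Fin n`. The half-graph from `C_i` to
`C_{i+1}` forbids `g (i + 1) < g i`, so `g` is nondecreasing all the way around the cycle and
hence constant.
-/

theorem Finset.exists_eq_image_graph_of_injOn_fst {ι α : Type*} [Fintype ι] [DecidableEq ι]
    [DecidableEq α] {K : Finset (ι × α)} (hinj : Set.InjOn Prod.fst (K : Set (ι × α)))
    (hcard : K.card = Fintype.card ι) :
    ∃ g : ι → α, K = Finset.univ.image fun i => (i, g i) := by
  have hfst : K.image Prod.fst = Finset.univ :=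
    Finset.eq_univ_of_card _ (by rw [Finset.card_image_of_injOn hinj, hcard])
  have hmem (i : ι) : ∃ x, (i, x) ∈ K := by
    obtain ⟨p, hp, rfl⟩ := Finset.mem_image.mp (hfst ▸ Finset.mem_univ i)
    exact ⟨p.2, hp⟩
  choose g hg using hmem
  refine ⟨g, (Finset.eq_of_subset_of_card_le ?_ ?_).symm⟩
  · simpa [Finset.image_subset_iff] using hg
  · rw [Finset.card_image_of_injective _ fun i j h => congrArg Prod.fst h, hcard,
      Finset.card_univ]

theorem Fin.eq_apply_zero_of_forall_le_add_one {α : Type*} [PartialOrder α] {k : ℕ} {g : Fin (k + 1) → α}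
    (hg : ∀ i, g i ≤ g (i + 1)) (i : Fin (k + 1)) : g i = g 0 := by
  have hmono : Monotone g :=
    Fin.monotone_iff_le_succ.mpr fun j => Fin.coeSucc_eq_succ (a := j) ▸ hg j.castSucc
  have hwrap : g (Fin.last k) ≤ g 0 := Fin.last_add_one k ▸ hg (Fin.last k)
  exact le_antisymm ((hmono (Fin.le_last i)).trans hwrap) (hmono (Fin.zero_le i))

section IndependentSet

variable {ι α : Type} {G : SimpleGraph (ι × α)} {K : Finset (ι × α)}

theorem IsIndep.injOn_fst (hK : IsIndep G (K : Set (ι × α)))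
    (hclique : ∀ i x y, x ≠ y → G.Adj (i, x) (i, y)) :
    Set.InjOn Prod.fst (K : Set (ι × α)) := by
  rintro ⟨i, x⟩ hp ⟨j, y⟩ hq (rfl : i = j)
  by_contra hne
  exact hK hp hq hne (hclique i x y fun h => hne (h ▸ rfl))

theorem IsIndep.snd_le_of_mem_of_mem_add_one [Add ι] [One ι] [LinearOrder α]
    (hK : IsIndep G (K : Set (ι × α)))
    (hhalf : ∀ i x y, y < x → G.Adj (i, x) (i + 1, y)) {i : ι} {x y : α}
    (hx : (i, x) ∈ K) (hy : (i + 1, y) ∈ K) : x ≤ y := by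
  by_contra! hlt
  exact hK hx hy (fun h => hlt.ne (congrArg Prod.snd h).symm) (hhalf i x y hlt)

end IndependentSet

theorem stmt14_general (m n : ℕ) (hm : 3 ≤ m)
    (G : SimpleGraph (Fin m × Fin n))
    (hadj : ∀ (i j : Fin m) (x y : Fin n),
      G.Adj (i, x) (j, y) ↔
        ((i = j ∧ x ≠ y) ∨ (j.val = (i.val + 1) % m ∧ y < x) ∨ (i.val = (j.val + 1) % m ∧ x < y)))
    (K : Finset (Fin m × Fin n)) (hK : IsIndep G ↑K) (hcard : K.card = m) :
    ∃ x₀ : Fin n, K = Finset.univ.image fun i : Fin m => (i, x₀) := by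
  obtain ⟨k, rfl⟩ : ∃ k, m = k + 1 := ⟨m - 1, by omega⟩
  have hclique (i : Fin (k + 1)) (x y : Fin n) (hxy : x ≠ y) : G.Adj (i, x) (i, y) :=
    (hadj i i x y).mpr (Or.inl ⟨rfl, hxy⟩)
  have hhalf (i : Fin (k + 1)) (x y : Fin n) (hyx : y < x) : G.Adj (i, x) (i + 1, y) :=
    (hadj _ _ x y).mpr (Or.inr (Or.inl ⟨by simp [Fin.val_add], hyx⟩))
  obtain ⟨g, rfl⟩ := Finset.exists_eq_image_graph_of_injOn_fst (hK.injOn_fst hclique)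
    (by rw [hcard, Fintype.card_fin])
  have hmem (i : Fin (k + 1)) : (i, g i) ∈ Finset.univ.image fun i => (i, g i) := by simp
  have hconst := Fin.eq_apply_zero_of_forall_le_add_one fun i =>
    hK.snd_le_of_mem_of_mem_add_one hhalf (hmem i) (hmem (i + 1))
  exact ⟨g 0, by simp only [hconst]⟩

/-- `m ≥ 3` cliques of size `n` arranged in a cycle with forward half-graphs between
consecutive cliques and no other edges: any independent set of size `m` takes exactly one
vertex per clique, all with the same index. -/
theorem stmt14 (m n : ℕ) (hm : 3 ≤ m) (hn : 1 ≤ n)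
    (G : SimpleGraph (Fin m × Fin n))
    (hadj : ∀ (i j : Fin m) (x y : Fin n),
      G.Adj (i, x) (j, y) ↔
        ((i = j ∧ x ≠ y) ∨ (j.val = (i.val + 1) % m ∧ y < x) ∨ (i.val = (j.val + 1) % m ∧ x < y)))
    (K : Finset (Fin m × Fin n)) (hK : IsIndep G ↑K) (hcard : K.card = m) :
    ∃ x₀ : Fin n, K = Finset.univ.image fun i : Fin m => (i, x₀) :=
  stmt14_general m n hm G hadj K hK hcard
end
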